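/- Let H be a Hopf algebra over k and (V,Y,1,s) an H-module field algebra, and equip V⊗H with the field algebra structure Y_H(a⊗h,z)(b⊗g) = Σ_{n∈Z} a_n(h_1 b) ⊗ h_2 g · z^{−n−1}, vacuum 1⊗1, s(a⊗h) = sa⊗h. Then the map Y^V(a⊗h,z)b := Y(a,z)(hb) makes (V, Y^V, s) a left module over the field algebra (V⊗H, Y_H, 1⊗1); in particular (V,Y,s) is a left module over the field algebra (V^H, Y, 1, s). -/

import Mathlib

/-!
For pure tensors `a ⊗ h`, `b ⊗ g` and `x ∈ V`, the rule `h (b_n c) = Σ (h₁ b)_n (h₂ c)` turns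
`i_{z,w} Y^V(a ⊗ h, z - w) Y^V(b ⊗ g, -w) x` into `Σ i_{z,w} Y(a, z - w) Y(h₁ b, -w) (h₂ g x)`,
and the definition of `Y_H` turns `Y^V(Y_H(a ⊗ h, z)(b ⊗ g), -w) x` into
`Σ Y(Y(a, z) h₁ b, -w) (h₂ g x)`, so associativity of `V`, applied term by term, gives the
associativity of `Y^V` on pure tensors. Both sides are bilinear (truncation makes the expansion
`i_{z,w}` a finite sum in each coefficient), which settles all of `V ⊗ H`; the other axioms
reduce to those of `V` because `H` commutes with `s`. For `V^H`, restrict the regular module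
`V` along the inclusion `V^H → V`.
-/

open scoped TensorProduct DirectSum

namespace HopfVA

/-- Generalized binomial coefficient `C(r, j)` for an integer `r` (exact division). -/
def ibinom (r : ℤ) (j : ℕ) : ℤ := (∏ i ∈ Finset.range j, (r - (i : ℤ))) / (j.factorial : ℤ)

/-- `(-1)^q` for an integer exponent `q`. -/
def negOnePow (q : ℤ) : ℤ := if Even q then 1 else -1

section Core

variable {k : Type*} [CommRing k] {V : Type*} [AddCommGroup V] [Module k V]

/-- If `f p q` is the coefficient of `z^p w^q` of a two-variable formal distribution,
then `zwMul n f p q` is the coefficient of `z^p w^q` of `(z-w)^n` times that distribution. -/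
def zwMul (n : ℕ) (f : ℤ → ℤ → V) : ℤ → ℤ → V := fun p q =>
  ∑ i ∈ Finset.range (n + 1),
    ((-1 : ℤ) ^ i * (n.choose i : ℤ)) • f (p - ((n : ℤ) - (i : ℤ))) (q - (i : ℤ))

/-- The data of a state-field correspondence on a pointed vector space:
`Y a n b` is the `n`-th product `a_n b` (so that `Y(a,z)b = ∑ (a_n b) z^{-n-1}`),
`vac` is the vacuum vector and `T` is the translation operator. -/
structure VAData (k V : Type*) [CommRing k] [AddCommGroup V] [Module k V] where
  Y : V →ₗ[k] ℤ → Module.End k V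
  vac : V
  T : Module.End k V

namespace VAData

variable (F : VAData k V)

/-- coefficient of `z^p w^q` in `Y(a,z)Y(b,w)c`. -/
def prodZW (a b c : V) : ℤ → ℤ → V := fun p q => F.Y a (-p - 1) (F.Y b (-q - 1) c)

/-- coefficient of `z^p w^q` in `Y(b,w)Y(a,z)c`. -/
def prodWZ (a b c : V) : ℤ → ℤ → V := fun p q => F.Y b (-q - 1) (F.Y a (-p - 1) c)

/-- coefficient of `z^p w^q` in `i_{z,w} Y(a,z-w)Y(b,-w)c`. -/
noncomputable def compLHS (a b c : V) : ℤ → ℤ → V := fun p q =>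
  negOnePow q •
    ∑ᶠ j : ℕ, ibinom (p + (j : ℤ)) j • F.Y a (-p - 1 - (j : ℤ)) (F.Y b ((j : ℤ) - 1 - q) c)

/-- Truncated (at `j < J`) version of `compLHS`, for `h`-adic statements. -/
def compLHStr (J : ℕ) (a b c : V) : ℤ → ℤ → V := fun p q =>
  negOnePow q •
    ∑ j ∈ Finset.range J, ibinom (p + (j : ℤ)) j • F.Y a (-p - 1 - (j : ℤ)) (F.Y b ((j : ℤ) - 1 - q) c)

/-- coefficient of `z^p w^q` in `Y(Y(a,z)b,-w)c`. -/
def compRHS (a b c : V) : ℤ → ℤ → V := fun p q =>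
  negOnePow q • F.Y (F.Y a (-p - 1) b) (-q - 1) c

/-- The axioms of a state-field correspondence: truncation, the vacuum axioms
`Y(1,z)a = a`, `Y(a,z)1 = a + (Ta)z + ⋯ ∈ V[[z]]`, and translation covariance
`[T, Y(a,z)] = Y(Ta,z) = ∂_z Y(a,z)`. -/
def IsStateField : Prop :=
  (∀ a b : V, ∃ N : ℤ, ∀ n : ℤ, N ≤ n → F.Y a n b = 0) ∧
  (∀ (a : V) (n : ℤ), F.Y F.vac n a = if n = -1 then a else 0) ∧
  (∀ (a : V) (n : ℤ), 0 ≤ n → F.Y a n F.vac = 0) ∧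
  (∀ a : V, F.Y a (-1) F.vac = a) ∧
  (∀ a : V, F.Y a (-2) F.vac = F.T a) ∧
  (∀ (a b : V) (n : ℤ), F.Y (F.T a) n b = F.T (F.Y a n b) - F.Y a n (F.T b)) ∧
  (∀ (a b : V) (n : ℤ), F.Y (F.T a) n b = (-n : ℤ) • F.Y a (n - 1) b)

/-- The associativity relation
`(z-w)^N i_{z,w} Y(a,z-w)Y(b,-w)c = (z-w)^N Y(Y(a,z)b,-w)c`. -/
def IsAssocFA : Prop := ∀ a b c : V, ∃ N : ℕ, ∀ p q : ℤ,
  zwMul N (F.compLHS a b c) p q = zwMul N (F.compRHS a b c) p q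

/-- A field algebra is a state-field correspondence satisfying associativity. -/
def IsFieldAlgebra : Prop := F.IsStateField ∧ F.IsAssocFA

/-- `(z-w)^n [Y(a,z), Y(b,w)] = 0`. -/
def IsLocalPair (a b : V) : Prop :=
  ∃ n : ℕ, ∀ (c : V) (p q : ℤ), zwMul n (F.prodZW a b c) p q = zwMul n (F.prodWZ a b c) p q

/-- A vertex algebra is a field algebra all of whose pairs of fields are local. -/
def IsVertexAlgebra : Prop := F.IsFieldAlgebra ∧ ∀ a b : V, F.IsLocalPair a b

/-- `(z-w)^n Y(a,z)Y(b,w) = (z-w)^n ∑ᵢ Y(bⁱ,w)Y(aⁱ,z)`. -/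
def IsSLocalPair (a b : V) : Prop :=
  ∃ (n m : ℕ) (A B : Fin m → V), ∀ (c : V) (p q : ℤ),
    zwMul n (F.prodZW a b c) p q = ∑ i, zwMul n (F.prodWZ (A i) (B i) c) p q

/-- An `S`-local vertex algebra is a field algebra all of whose pairs of fields
are `S`-local. -/
def IsSLocalVA : Prop := F.IsFieldAlgebra ∧ ∀ a b : V, F.IsSLocalPair a b

end VAData

/-- Data of a module over a field algebra: the module fields `Y^M` and translation `sM`. -/
structure VModData (k V M : Type*) [CommRing k] [AddCommGroup V] [Module k V]
    [AddCommGroup M] [Module k M] where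
  YM : V →ₗ[k] ℤ → Module.End k M
  sM : Module.End k M

namespace VModData

variable {M : Type*} [AddCommGroup M] [Module k M]

/-- coefficient of `z^p w^q` in `Y^M(a,z)Y^M(b,w)x`. -/
def mprodZW (Mo : VModData k V M) (a b : V) (x : M) : ℤ → ℤ → M := fun p q =>
  Mo.YM a (-p - 1) (Mo.YM b (-q - 1) x)

/-- coefficient of `z^p w^q` in `Y^M(b,w)Y^M(a,z)x`. -/
def mprodWZ (Mo : VModData k V M) (a b : V) (x : M) : ℤ → ℤ → M := fun p q =>
  Mo.YM b (-q - 1) (Mo.YM a (-p - 1) x)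

/-- coefficient of `z^p w^q` in `i_{z,w} Y^M(a,z-w)Y^M(b,-w)x`. -/
noncomputable def mcompLHS (Mo : VModData k V M) (a b : V) (x : M) : ℤ → ℤ → M := fun p q =>
  negOnePow q •
    ∑ᶠ j : ℕ, ibinom (p + (j : ℤ)) j • Mo.YM a (-p - 1 - (j : ℤ)) (Mo.YM b ((j : ℤ) - 1 - q) x)

/-- coefficient of `z^p w^q` in `Y^M(Y(a,z)b,-w)x`. -/
def mcompRHS (F : VAData k V) (Mo : VModData k V M) (a b : V) (x : M) : ℤ → ℤ → M := fun p q =>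
  negOnePow q • Mo.YM (F.Y a (-p - 1) b) (-q - 1) x

/-- `M` is a left module over the field algebra `F`: truncation, vacuum, translation
invariance and the associativity axiom. -/
def IsModule (F : VAData k V) (Mo : VModData k V M) : Prop :=
  (∀ (a : V) (x : M), ∃ N : ℤ, ∀ n : ℤ, N ≤ n → Mo.YM a n x = 0) ∧
  (∀ (x : M) (n : ℤ), Mo.YM F.vac n x = if n = -1 then x else 0) ∧
  (∀ (a : V) (x : M) (n : ℤ),
      Mo.sM (Mo.YM a n x) - Mo.YM a n (Mo.sM x) = (-n : ℤ) • Mo.YM a (n - 1) x) ∧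
  (∀ (a b : V) (x : M), ∃ N : ℕ, ∀ p q : ℤ,
      zwMul N (mcompLHS Mo a b x) p q = zwMul N (mcompRHS F Mo a b x) p q)

/-- Locality of the module fields `Y^M(a,z)`, `Y^M(b,w)`. -/
def IsLocalModPair (Mo : VModData k V M) (a b : V) : Prop :=
  ∃ n : ℕ, ∀ (x : M) (p q : ℤ),
    zwMul n (mprodZW Mo a b x) p q = zwMul n (mprodWZ Mo a b x) p q

/-- `S`-locality of the module fields. -/
def IsSLocalModPair (Mo : VModData k V M) (a b : V) : Prop :=
  ∃ (n m : ℕ) (A B : Fin m → V), ∀ (x : M) (p q : ℤ),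
    zwMul n (mprodZW Mo a b x) p q = ∑ i, zwMul n (mprodWZ Mo (A i) (B i) x) p q

end VModData

/-- The `f`-product `a_(f) b = Res_z f(z) Y(a,z) b`, where `f n` is the coefficient
of `z^n` in `f`. -/
noncomputable def fProduct (F : VAData k V) (f : ℤ → k) (a b : V) : V :=
  ∑ᶠ n : ℤ, f n • F.Y a n b

/-- Coefficients of the formal derivative `∂_z f`. -/
def derivCoef (f : ℤ → k) : ℤ → k := fun n => ((n : ℤ) + 1 : ℤ) • f (n + 1)

/-- The subspace `V_(g) V` spanned by all products `a_(g) b` with `g = ∂_z f`. -/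
noncomputable def gSpan (F : VAData k V) (f : ℤ → k) : Submodule k V :=
  Submodule.span k {x : V | ∃ a b : V, x = fProduct F (derivCoef f) a b}

/-- `x ≡ y mod h^M`, where `h = r`. -/
def ModH (r : k) (M : ℕ) (x y : V) : Prop := ∃ v : V, x - y = r ^ M • v

/-- An automorphism of the (state-field data of a) vertex algebra `F`. -/
def IsVAAut (F : VAData k V) (φ : V ≃ₗ[k] V) : Prop :=
  φ F.vac = F.vac ∧ (∀ v : V, φ (F.T v) = F.T (φ v)) ∧
  ∀ (a b : V) (n : ℤ), φ (F.Y a n b) = F.Y (φ a) n (φ b)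

end Core

/-- The coefficients of `f(z) = z⁻¹`. -/
def zinvCoef (k : Type*) [CommRing k] : ℤ → k := fun n => if n = -1 then 1 else 0

/-- The coefficients of `f(z) = c·e^{cz}/(e^{cz}-1)
  = z⁻¹ + c + ∑_{m≥1} B_m c^m z^{m-1}/m!` (Bernoulli numbers `B_m`). -/
noncomputable def berCoef {k : Type*} [Field k] [CharZero k] (c : k) : ℤ → k := fun n =>
  if n < -1 then 0
  else ((bernoulli (n + 1).toNat : ℚ) • (c ^ (n + 1).toNat)) / ((n + 1).toNat.factorial : k)
        + (if n = 0 then c else 0)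

/-- `f(z) = z⁻¹` or `f(z) = c·e^{cz}/(e^{cz}-1)` with `c ≠ 0`. -/
def AdmissibleF {k : Type*} [Field k] [CharZero k] (f : ℤ → k) : Prop :=
  f = zinvCoef k ∨ ∃ c : k, c ≠ 0 ∧ f = berCoef c

section HopfDefs

variable {k : Type*} [CommRing k] {V : Type*} [AddCommGroup V] [Module k V]
variable (H : Type*) [Ring H] [HopfAlgebra k H]

/-- `V` is an `H`-module field algebra: `h·1 = ε(h)1`, `h(Ta) = T(ha)` and
`h(aₙb) = ∑ (h₁a)ₙ(h₂b)` (the last condition quantified over all finite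
representations of `Δ(h)`). -/
def IsHModuleFA [Module H V] [IsScalarTower k H V] (F : VAData k V) : Prop :=
  (∀ h : H, h • F.vac = (Coalgebra.counit (R := k) h) • F.vac) ∧
  (∀ (h : H) (a : V), h • (F.T a : V) = F.T (h • a)) ∧
  (∀ (h : H) (a b : V) (n : ℤ) (m : ℕ) (h1 h2 : Fin m → H),
      Coalgebra.comul (R := k) h = ∑ i, h1 i ⊗ₜ[k] h2 i →
      h • (F.Y a n b : V) = ∑ i, F.Y (h1 i • a) n (h2 i • b))

/-- The smash product structure `V # H` on `V ⊗ H`: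
`Y(a#h,z)(b#g) = ∑ Y(a,z)(h₁b) # h₂g`, vacuum `1#1`, translation `T#1`. -/
def SmashChar [Module H V] [IsScalarTower k H V] (F : VAData k V)
    (FS : VAData k (V ⊗[k] H)) : Prop :=
  (∀ (a b : V) (h g : H) (n : ℤ) (m : ℕ) (h1 h2 : Fin m → H),
      Coalgebra.comul (R := k) h = ∑ i, h1 i ⊗ₜ[k] h2 i →
      FS.Y (a ⊗ₜ[k] h) n (b ⊗ₜ[k] g) = ∑ i, (F.Y a n (h1 i • b) : V) ⊗ₜ[k] (h2 i * g)) ∧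
  (FS.vac = F.vac ⊗ₜ[k] (1 : H)) ∧
  (∀ (a : V) (h : H), FS.T (a ⊗ₜ[k] h) = (F.T a : V) ⊗ₜ[k] h)

end HopfDefs

/-- The fixed point subspace `V^H = {v | h v = ε(h) v for all h}`. -/
def hFixed (k V H : Type*) [CommRing k] [AddCommGroup V] [Module k V]
    [Ring H] [HopfAlgebra k H] [Module H V] [IsScalarTower k H V]
    [SMulCommClass k H V] : Submodule k V where
  carrier := {v : V | ∀ h : H, h • v = (Coalgebra.counit (R := k) h) • v}
  add_mem' := by
    intro a b ha hb h
    rw [smul_add, ha h, hb h, ← smul_add]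
  zero_mem' := by
    intro h
    simp
  smul_mem' := by
    intro c v hv h
    rw [← smul_comm c h v, hv h, smul_smul, smul_smul, mul_comm]

end HopfVA

namespace HopfVA

open Finset

section ZWMul

variable {M : Type*} [AddCommGroup M]

lemma zwMul_add (n : ℕ) (f g : ℤ → ℤ → M) : zwMul n (f + g) = zwMul n f + zwMul n g := by
  ext p q
  simp only [zwMul, Pi.add_apply, smul_add, sum_add_distrib]

lemma zwMul_eq_sum_nsmul (n : ℕ) (f : ℤ → ℤ → M) (p q : ℤ) :
    zwMul n f p q = ∑ i ∈ range (n + 1),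
      n.choose i • ((-1 : ℤ) ^ i • f (p - ((n - i : ℕ) : ℤ)) (q - i)) := by
  refine sum_congr rfl fun i hi => ?_
  rw [Nat.cast_sub (Nat.lt_succ_iff.mp (mem_range.mp hi)), mul_comm, mul_smul, natCast_zsmul]

-- `(z - w)^(n+1) = (z - w) (z - w)^n`, with Pascal's rule on the coefficients.
lemma zwMul_succ (n : ℕ) (f : ℤ → ℤ → M) (p q : ℤ) :
    zwMul (n + 1) f p q = zwMul n f (p - 1) q - zwMul n f p (q - 1) := by
  rw [zwMul_eq_sum_nsmul, sum_choose_succ_nsmul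
    (fun i j => (-1 : ℤ) ^ i • f (p - (j : ℤ)) (q - i)), sub_eq_add_neg, zwMul_eq_sum_nsmul,
    zwMul_eq_sum_nsmul, ← sum_neg_distrib]
  congr 1 <;> refine sum_congr rfl fun i hi => ?_
  · have hi : i ≤ n := Nat.lt_succ_iff.mp (mem_range.mp hi)
    rw [Nat.cast_sub (by omega : i ≤ n + 1), Nat.cast_sub hi]
    push_cast
    ring_nf
  · rw [← smul_neg, pow_succ, mul_neg_one, neg_smul, Nat.cast_succ, sub_add_eq_sub_sub,
      sub_right_comm]

def ZWMulEq (f g : ℤ → ℤ → M) : Prop := ∃ N : ℕ, ∀ p q : ℤ, zwMul N f p q = zwMul N g p q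

lemma zwMul_congr_of_le {n m : ℕ} (hnm : n ≤ m) {f g : ℤ → ℤ → M}
    (h : ∀ p q, zwMul n f p q = zwMul n g p q) (p q : ℤ) : zwMul m f p q = zwMul m g p q := by
  induction m, hnm using Nat.le_induction generalizing p q with
  | base => exact h p q
  | succ m _ ih => rw [zwMul_succ, zwMul_succ, ih, ih]

namespace ZWMulEq

lemma refl (f : ℤ → ℤ → M) : ZWMulEq f f := ⟨0, fun _ _ => rfl⟩

lemma add {f₁ f₂ g₁ g₂ : ℤ → ℤ → M} (h₁ : ZWMulEq f₁ g₁) (h₂ : ZWMulEq f₂ g₂) :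
    ZWMulEq (f₁ + f₂) (g₁ + g₂) := by
  obtain ⟨N₁, e₁⟩ := h₁
  obtain ⟨N₂, e₂⟩ := h₂
  refine ⟨max N₁ N₂, fun p q => ?_⟩
  rw [zwMul_add, zwMul_add, Pi.add_apply, Pi.add_apply, Pi.add_apply, Pi.add_apply,
    zwMul_congr_of_le (le_max_left N₁ N₂) e₁, zwMul_congr_of_le (le_max_right N₁ N₂) e₂]

lemma sum {ι : Type*} (s : Finset ι) {f g : ι → ℤ → ℤ → M} (h : ∀ i ∈ s, ZWMulEq (f i) (g i)) :
    ZWMulEq (∑ i ∈ s, f i) (∑ i ∈ s, g i) := by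
  classical
  induction s using Finset.induction_on with
  | empty => simpa only [sum_empty] using refl 0
  | insert i s hi ih =>
    rw [sum_insert hi, sum_insert hi]
    exact (h i (mem_insert_self i s)).add (ih fun j hj => h j (mem_insert_of_mem hj))

end ZWMulEq

end ZWMul

namespace VModData

variable {k : Type*} [CommRing k] {W : Type*} [AddCommGroup W] [Module k W]
  {M : Type*} [AddCommGroup M] [Module k M] (Mo : VModData k W M)

lemma hasFiniteSupport_mcompLHS_summand (u v : W) (x : M) (p q : ℤ)
    (hv : ∃ Z : ℤ, ∀ n, Z ≤ n → Mo.YM v n x = 0) :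
    Function.HasFiniteSupport fun j : ℕ =>
      ibinom (p + j) j • Mo.YM u (-p - 1 - j) (Mo.YM v (j - 1 - q) x) := by
  obtain ⟨Z, hZ⟩ := hv
  refine (Set.finite_Iio (Z + q + 1).toNat).subset fun j hj => ?_
  by_contra hjZ
  rw [Set.mem_Iio, not_lt, Int.toNat_le] at hjZ
  exact hj (by simp only [hZ _ (by omega : Z ≤ (j : ℤ) - 1 - q), map_zero, smul_zero])

@[simp] lemma mcompLHS_zero_left (v : W) (x : M) : Mo.mcompLHS 0 v x = 0 := by
  ext p q
  simp [mcompLHS]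

@[simp] lemma mcompLHS_zero_right (u : W) (x : M) : Mo.mcompLHS u 0 x = 0 := by
  ext p q
  simp [mcompLHS]

@[simp] lemma mcompRHS_zero_left (F : VAData k W) (v : W) (x : M) : mcompRHS F Mo 0 v x = 0 := by
  ext p q
  simp [mcompRHS]

@[simp] lemma mcompRHS_zero_right (F : VAData k W) (u : W) (x : M) :
    mcompRHS F Mo u 0 x = 0 := by
  ext p q
  simp [mcompRHS]

lemma mcompRHS_add_left (F : VAData k W) (u₁ u₂ v : W) (x : M) :
    mcompRHS F Mo (u₁ + u₂) v x = mcompRHS F Mo u₁ v x + mcompRHS F Mo u₂ v x := by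
  ext p q
  simp only [mcompRHS, Pi.add_apply, map_add, LinearMap.add_apply, smul_add]

lemma mcompRHS_add_right (F : VAData k W) (u v₁ v₂ : W) (x : M) :
    mcompRHS F Mo u (v₁ + v₂) x = mcompRHS F Mo u v₁ x + mcompRHS F Mo u v₂ x := by
  ext p q
  simp only [mcompRHS, Pi.add_apply, map_add, LinearMap.add_apply, smul_add]

lemma mcompLHS_add_left (htr : ∀ (v : W) (x : M), ∃ Z : ℤ, ∀ n, Z ≤ n → Mo.YM v n x = 0)
    (u₁ u₂ v : W) (x : M) :
    Mo.mcompLHS (u₁ + u₂) v x = Mo.mcompLHS u₁ v x + Mo.mcompLHS u₂ v x := by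
  ext p q
  simp only [mcompLHS, Pi.add_apply, map_add, LinearMap.add_apply, smul_add]
  rw [finsum_add_distrib (Mo.hasFiniteSupport_mcompLHS_summand u₁ v x p q (htr v x))
    (Mo.hasFiniteSupport_mcompLHS_summand u₂ v x p q (htr v x)), smul_add]

lemma mcompLHS_add_right (htr : ∀ (v : W) (x : M), ∃ Z : ℤ, ∀ n, Z ≤ n → Mo.YM v n x = 0)
    (u v₁ v₂ : W) (x : M) :
    Mo.mcompLHS u (v₁ + v₂) x = Mo.mcompLHS u v₁ x + Mo.mcompLHS u v₂ x := by
  ext p q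
  simp only [mcompLHS, Pi.add_apply, map_add, LinearMap.add_apply, smul_add]
  rw [finsum_add_distrib (Mo.hasFiniteSupport_mcompLHS_summand u v₁ x p q (htr v₁ x))
    (Mo.hasFiniteSupport_mcompLHS_summand u v₂ x p q (htr v₂ x)), smul_add]

end VModData

lemma zwMulEq_mcomp_of_tmul {k : Type*} [CommRing k] {V H M : Type*} [AddCommGroup V]
    [Module k V] [AddCommGroup H] [Module k H] [AddCommGroup M] [Module k M]
    (FS : VAData k (V ⊗[k] H)) (Mo : VModData k (V ⊗[k] H) M)
    (htr : ∀ (v : V ⊗[k] H) (x : M), ∃ Z : ℤ, ∀ n, Z ≤ n → Mo.YM v n x = 0)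
    (hpure : ∀ (a : V) (h : H) (b : V) (g : H) (x : M),
      ZWMulEq (Mo.mcompLHS (a ⊗ₜ h) (b ⊗ₜ g) x) (Mo.mcompRHS FS (a ⊗ₜ h) (b ⊗ₜ g) x))
    (u v : V ⊗[k] H) (x : M) : ZWMulEq (Mo.mcompLHS u v x) (Mo.mcompRHS FS u v x) := by
  induction v using TensorProduct.induction_on generalizing u with
  | zero => simpa using ZWMulEq.refl 0
  | tmul b g =>
    induction u using TensorProduct.induction_on with
    | zero => simpa using ZWMulEq.refl 0
    | tmul a h => exact hpure a h b g x
    | add u₁ u₂ ih₁ ih₂ =>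
      rw [Mo.mcompLHS_add_left htr, Mo.mcompRHS_add_left]
      exact ih₁.add ih₂
  | add v₁ v₂ ih₁ ih₂ =>
    rw [Mo.mcompLHS_add_right htr, Mo.mcompRHS_add_right]
    exact (ih₁ u).add (ih₂ u)

namespace VAData

variable {k : Type*} [CommRing k] {V : Type*} [AddCommGroup V] [Module k V]

def regularMod (F : VAData k V) : VModData k V V := ⟨F.Y, F.T⟩

lemma isModule_regularMod {F : VAData k V} (hF : F.IsFieldAlgebra) :
    VModData.IsModule F F.regularMod := by
  obtain ⟨⟨htr, hvac, -, -, -, hT₁, hT₂⟩, hassoc⟩ := hF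
  refine ⟨htr, hvac, fun a x n => ?_, hassoc⟩
  show F.T (F.Y a n x) - F.Y a n (F.T x) = (-n : ℤ) • F.Y a (n - 1) x
  rw [← hT₁, hT₂]

end VAData

namespace VModData

variable {k : Type*} [CommRing k] {V W M : Type*} [AddCommGroup V] [Module k V]
  [AddCommGroup W] [Module k W] [AddCommGroup M] [Module k M]

def comap (Mo : VModData k V M) (φ : W →ₗ[k] V) : VModData k W M := ⟨Mo.YM ∘ₗ φ, Mo.sM⟩

lemma isModule_comap {FW : VAData k W} {F : VAData k V} {Mo : VModData k V M}
    (hMo : IsModule F Mo) (φ : W →ₗ[k] V) (hvac : φ FW.vac = F.vac)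
    (hY : ∀ (a b : W) (n : ℤ), φ (FW.Y a n b) = F.Y (φ a) n (φ b)) :
    IsModule FW (Mo.comap φ) := by
  obtain ⟨htr, hvac', hT, hassoc⟩ := hMo
  refine ⟨fun a => htr (φ a), fun x n => ?_, fun a => hT (φ a), fun a b x => ?_⟩
  · show Mo.YM (φ FW.vac) n x = _
    rw [hvac, hvac']
  · have hRHS : mcompRHS FW (Mo.comap φ) a b x = mcompRHS F Mo (φ a) (φ b) x := by
      ext p q
      simp only [mcompRHS, comap, LinearMap.comp_apply, hY]
    rw [hRHS]
    exact hassoc (φ a) (φ b) x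

end VModData

section Smash

variable {k : Type*} [CommRing k] {V : Type*} [AddCommGroup V] [Module k V]
  {H : Type*} [Ring H] [Algebra k H] [Module H V] [IsScalarTower k H V]

variable (H) in
noncomputable def smashMod (F : VAData k V) : VModData k (V ⊗[k] H) V where
  YM := TensorProduct.lift <| LinearMap.mk₂ k (fun a h n => F.Y a n ∘ₗ Algebra.lsmul k k V h)
    (by intros; ext; simp) (by intros; ext; simp) (by intros; ext; simp) (by intros; ext; simp)
  sM := F.T

@[simp] lemma smashMod_YM_tmul (F : VAData k V) (a : V) (h : H) (n : ℤ) (b : V) :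
    (smashMod H F).YM (a ⊗ₜ h) n b = F.Y a n (h • b) := rfl

lemma smashMod_truncation {F : VAData k V} (htr : ∀ a b : V, ∃ N : ℤ, ∀ n, N ≤ n → F.Y a n b = 0)
    (u : V ⊗[k] H) (x : V) : ∃ N : ℤ, ∀ n, N ≤ n → (smashMod H F).YM u n x = 0 := by
  induction u using TensorProduct.induction_on with
  | zero => exact ⟨0, fun n _ => by simp⟩
  | tmul a h => exact htr a (h • x)
  | add u v hu hv =>
    obtain ⟨N₁, hN₁⟩ := hu
    obtain ⟨N₂, hN₂⟩ := hv
    refine ⟨max N₁ N₂, fun n hn => ?_⟩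
    simp only [map_add, Pi.add_apply, LinearMap.add_apply, hN₁ n (le_of_max_le_left hn),
      hN₂ n (le_of_max_le_right hn), add_zero]

end Smash

section HopfSmash

variable {k : Type*} [CommRing k] {V : Type*} [AddCommGroup V] [Module k V]
  {H : Type*} [Ring H] [HopfAlgebra k H] [Module H V] [IsScalarTower k H V]
  {F : VAData k V}

lemma smashMod_translation (hHF : IsHModuleFA H F)
    (hT : ∀ (a x : V) (n : ℤ), F.T (F.Y a n x) - F.Y a n (F.T x) = (-n : ℤ) • F.Y a (n - 1) x)
    (u : V ⊗[k] H) (x : V) (n : ℤ) :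
    F.T ((smashMod H F).YM u n x) - (smashMod H F).YM u n (F.T x)
      = (-n : ℤ) • (smashMod H F).YM u (n - 1) x := by
  induction u using TensorProduct.induction_on with
  | zero => simp
  | tmul a h => rw [smashMod_YM_tmul, smashMod_YM_tmul, smashMod_YM_tmul, hHF.2.1, hT]
  | add u v hu hv =>
    simp only [map_add, Pi.add_apply, LinearMap.add_apply, smul_add, ← hu, ← hv]
    abel

section Tmul

variable {m : ℕ} {h : H} {h₁ h₂ : Fin m → H} (a b : V) (g : H) (x : V)

lemma mcompLHS_smashMod_tmul (hHF : IsHModuleFA H F)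
    (htr : ∀ a b : V, ∃ N : ℤ, ∀ n, N ≤ n → F.Y a n b = 0)
    (hcomul : Coalgebra.comul (R := k) h = ∑ i, h₁ i ⊗ₜ[k] h₂ i) :
    (smashMod H F).mcompLHS (a ⊗ₜ h) (b ⊗ₜ g) x
      = ∑ i, F.regularMod.mcompLHS a (h₁ i • b) (h₂ i • g • x) := by
  ext p q
  simp only [VModData.mcompLHS, Finset.sum_apply, ← Finset.smul_sum]
  rw [← finsum_sum_comm _ _ fun i _ => F.regularMod.hasFiniteSupport_mcompLHS_summand _ _ _ p q
    (htr _ _)]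
  congr 1
  refine finsum_congr fun j => ?_
  rw [smashMod_YM_tmul, smashMod_YM_tmul, hHF.2.2 h b (g • x) _ m h₁ h₂ hcomul, map_sum,
    Finset.smul_sum]
  rfl

lemma mcompRHS_smashMod_tmul {FS : VAData k (V ⊗[k] H)} (hFS : SmashChar H F FS)
    (hcomul : Coalgebra.comul (R := k) h = ∑ i, h₁ i ⊗ₜ[k] h₂ i) :
    VModData.mcompRHS FS (smashMod H F) (a ⊗ₜ h) (b ⊗ₜ g) x
      = ∑ i, VModData.mcompRHS F F.regularMod a (h₁ i • b) (h₂ i • g • x) := by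
  ext p q
  rw [Finset.sum_apply, Finset.sum_apply]
  simp only [VModData.mcompRHS, hFS.1 a b h g _ m h₁ h₂ hcomul, map_sum, Finset.sum_apply,
    LinearMap.sum_apply, Finset.smul_sum, smashMod_YM_tmul, mul_smul]
  rfl

end Tmul

theorem isModule_smashMod (hreg : VModData.IsModule F F.regularMod) (hHF : IsHModuleFA H F)
    {FS : VAData k (V ⊗[k] H)} (hFS : SmashChar H F FS) :
    VModData.IsModule FS (smashMod H F) := by
  obtain ⟨htr, hvac, hT, hassoc⟩ := hreg
  refine ⟨smashMod_truncation htr, fun x n => ?_, smashMod_translation hHF hT,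
    zwMulEq_mcomp_of_tmul FS _ (smashMod_truncation htr) fun a h b g x => ?_⟩
  · rw [hFS.2.1, smashMod_YM_tmul, one_smul]
    exact hvac x n
  · obtain ⟨m, h₁, h₂, hcomul⟩ := TensorProduct.exists_sum_tmul_eq (Coalgebra.comul (R := k) h)
    rw [mcompLHS_smashMod_tmul a b g x hHF htr hcomul, mcompRHS_smashMod_tmul a b g x hFS hcomul]
    exact ZWMulEq.sum _ fun i _ => hassoc a _ _

end HopfSmash

theorem statement5_general {k : Type*} [Field k]
    {V : Type*} [AddCommGroup V] [Module k V]
    {H : Type*} [Ring H] [HopfAlgebra k H]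
    [Module H V] [IsScalarTower k H V] [SMulCommClass k H V]
    (F : VAData k V) (hF : F.IsFieldAlgebra) (hHF : IsHModuleFA H F)
    (FS : VAData k (V ⊗[k] H)) (hFS : SmashChar H F FS) :
    (∃ Mo : VModData k (V ⊗[k] H) V,
      (∀ (a : V) (h : H) (n : ℤ) (b : V), Mo.YM (a ⊗ₜ[k] h) n b = F.Y a n (h • b)) ∧
      Mo.sM = F.T ∧
      VModData.IsModule FS Mo) ∧
    (∀ FH : VAData k (hFixed k V H),
      ((FH.vac : V) = F.vac) →
      (∀ a : hFixed k V H, (FH.T a : V) = F.T (a : V)) →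
      (∀ (a b : hFixed k V H) (m : ℤ), (FH.Y a m b : V) = F.Y (a : V) m (b : V)) →
      ∃ Mo2 : VModData k (hFixed k V H) V,
        (∀ (a : hFixed k V H) (n : ℤ) (b : V), Mo2.YM a n b = F.Y (a : V) n b) ∧
        Mo2.sM = F.T ∧
        VModData.IsModule FH Mo2) := by
  have hreg := VAData.isModule_regularMod hF
  refine ⟨⟨smashMod H F, fun _ _ _ _ => rfl, rfl, isModule_smashMod hreg hHF hFS⟩,
    fun FH hvac _ hY => ?_⟩
  exact ⟨F.regularMod.comap (hFixed k V H).subtype, fun _ _ _ => rfl, rfl,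
    VModData.isModule_comap hreg _ hvac hY⟩

/-- `(V, Y^V, s)` with `Y^V(a⊗h,z)b := Y(a,z)(hb)` is a left module
over the field algebra `V ⊗ H` (with the smash structure `Y_H`); in particular `V` is a
left module over the fixed-point field algebra `V^H`. -/
theorem statement5 {k : Type*} [Field k] [CharZero k]
    {V : Type*} [AddCommGroup V] [Module k V]
    {H : Type*} [Ring H] [HopfAlgebra k H]
    [Module H V] [IsScalarTower k H V] [SMulCommClass k H V]
    (F : VAData k V) (hF : F.IsFieldAlgebra) (hHF : IsHModuleFA H F)
    (FS : VAData k (V ⊗[k] H)) (hFS : SmashChar H F FS) :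
    (∃ Mo : VModData k (V ⊗[k] H) V,
      (∀ (a : V) (h : H) (n : ℤ) (b : V), Mo.YM (a ⊗ₜ[k] h) n b = F.Y a n (h • b)) ∧
      Mo.sM = F.T ∧
      VModData.IsModule FS Mo) ∧
    (∀ FH : VAData k (hFixed k V H),
      ((FH.vac : V) = F.vac) →
      (∀ a : hFixed k V H, (FH.T a : V) = F.T (a : V)) →
      (∀ (a b : hFixed k V H) (m : ℤ), (FH.Y a m b : V) = F.Y (a : V) m (b : V)) →
      ∃ Mo2 : VModData k (hFixed k V H) V,
        (∀ (a : hFixed k V H) (n : ℤ) (b : V), Mo2.YM a n b = F.Y (a : V) n b) ∧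
        Mo2.sM = F.T ∧
        VModData.IsModule FH Mo2) :=
  statement5_general F hF hHF FS hFS

end HopfVA
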